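/- For every graph G, nd(G) ≤ 2^{vc(G)} + vc(G), where vc(G) is the vertex cover number of G. -/

import Mathlib

open SimpleGraph

/-- Two vertices have the same neighborhood type. -/
def SameNbhdType {V : Type*} (G : SimpleGraph V) (u v : V) : Prop :=
  G.neighborSet u \ {v} = G.neighborSet v \ {u}

/-- `f` is a partition of the vertices of `G` into `n` induced copies of `H`. -/
def IsCopyPartition {V W : Type*} (G : SimpleGraph V) (H : SimpleGraph W)
    {n : ℕ} (f : Fin n → Set V) : Prop :=
  (∀ i, Nonempty ((G.induce (f i)) ≃g H)) ∧
    (Pairwise fun i j => Disjoint (f i) (f j)) ∧ (⋃ i, f i) = Set.univ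

/-- `G` can be partitioned into induced copies of `H`. -/
def PartitionedIntoCopies {V W : Type*} (G : SimpleGraph V) (H : SimpleGraph W) : Prop :=
  ∃ (n : ℕ) (f : Fin n → Set V), IsCopyPartition G H f

/-- Neighborhood diversity of a graph. -/
noncomputable def nd {V : Type*} (G : SimpleGraph V) : ℕ :=
  sInf {w | ∃ C : V → Fin w, ∀ u v, C u = C v → SameNbhdType G u v}

/-- Disjoint union of a family of graphs. -/
def disjointUnionGraph {ι : Type*} {V : ι → Type*} (Gs : ∀ i, SimpleGraph (V i)) :
    SimpleGraph (Σ i, V i) where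
  Adj x y := ∃ (i : ι) (a b : V i), (Gs i).Adj a b ∧ x = ⟨i, a⟩ ∧ y = ⟨i, b⟩
  symm := by constructor; rintro x y ⟨i, a, b, h, rfl, rfl⟩; exact ⟨i, b, a, h.symm, rfl, rfl⟩
  loopless := by
    constructor
    rintro x ⟨i, a, b, h, rfl, h2⟩
    obtain ⟨-, h2⟩ := Sigma.mk.inj_iff.mp h2
    exact (Gs i).irrefl (heq_iff_eq.mp h2 ▸ h)

/-- Substitution of graphs `Gs i` into a template graph `T`. -/
def substGraph {ι : Type*} (T : SimpleGraph ι) {V : ι → Type*}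
    (Gs : ∀ i, SimpleGraph (V i)) : SimpleGraph (Σ i, V i) where
  Adj x y := (∃ (i : ι) (a b : V i), (Gs i).Adj a b ∧ x = ⟨i, a⟩ ∧ y = ⟨i, b⟩) ∨
    (x.1 ≠ y.1 ∧ T.Adj x.1 y.1)
  symm := by
    constructor
    rintro x y (⟨i, a, b, h, rfl, rfl⟩ | ⟨hne, h⟩)
    · exact Or.inl ⟨i, b, a, h.symm, rfl, rfl⟩
    · exact Or.inr ⟨hne.symm, h.symm⟩
  loopless := by
    constructor
    rintro x (⟨i, a, b, h, rfl, h2⟩ | ⟨hne, h⟩)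
    · obtain ⟨-, h2⟩ := Sigma.mk.inj_iff.mp h2
      exact (Gs i).irrefl (heq_iff_eq.mp h2 ▸ h)
    · exact hne rfl

noncomputable def vertexCoverNumber {V : Type*} [Fintype V] (G : SimpleGraph V) : ℕ :=
  sInf {k | ∃ U : Finset V, (∀ u v, G.Adj u v → u ∈ U ∨ v ∈ U) ∧ U.card = k}

/-! Vertices outside a vertex cover `U` form an independent set, so such a vertex is determined,
up to neighborhood type, by its set of neighbors inside `U`: one class per subset of `U`, plus a
singleton class for every vertex of `U`. -/

section

variable {V : Type*} {G : SimpleGraph V}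

theorem SimpleGraph.IsVertexCover.neighborSet_subset {c : Set V} (hc : G.IsVertexCover c)
    {v : V} (hv : v ∉ c) : G.neighborSet v ⊆ c :=
  fun _ hw => (hc hw).resolve_left hv

theorem SimpleGraph.IsVertexCover.neighborSet_eq_of_forall_adj_iff {c : Set V}
    (hc : G.IsVertexCover c) {u v : V} (hu : u ∉ c) (hv : v ∉ c)
    (h : ∀ w ∈ c, G.Adj u w ↔ G.Adj v w) : G.neighborSet u = G.neighborSet v :=
  Set.Subset.antisymm
    (fun w hw => (h w (hc.neighborSet_subset hu hw)).mp hw)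
    (fun w hw => (h w (hc.neighborSet_subset hv hw)).mpr hw)

theorem SameNbhdType.of_neighborSet_eq {u v : V} (h : G.neighborSet u = G.neighborSet v) :
    SameNbhdType G u v := by
  have hv : v ∉ G.neighborSet u := h ▸ G.notMem_neighborSet_self
  have hu : u ∉ G.neighborSet v := h ▸ G.notMem_neighborSet_self
  rw [SameNbhdType, Set.sdiff_singleton_eq_self hv, Set.sdiff_singleton_eq_self hu, h]

theorem nd_le_card_of_sameNbhdType {α : Type*} [Fintype α] (C : V → α)
    (hC : ∀ u v, C u = C v → SameNbhdType G u v) : nd G ≤ Fintype.card α :=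
  Nat.sInf_le ⟨Fintype.equivFin α ∘ C, fun u v huv => hC u v ((Fintype.equivFin α).injective huv)⟩

theorem nd_le_two_pow_card_add_card {U : Finset V} (hU : G.IsVertexCover U) :
    nd G ≤ 2 ^ U.card + U.card := by
  classical
  let C : V → Set U ⊕ U := fun v =>
    if hv : v ∈ U then .inr ⟨v, hv⟩ else .inl {w | G.Adj v w}
  have hcard : Fintype.card (Set U ⊕ U) = 2 ^ U.card + U.card := by
    simp [Fintype.card_set]
  refine hcard ▸ nd_le_card_of_sameNbhdType C fun u v huv => ?_
  by_cases hu : u ∈ U <;> by_cases hv : v ∈ U <;>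
    simp only [C, hu, hv, ↓reduceDIte, Sum.inr.injEq, Subtype.mk.injEq, Sum.inl.injEq,
      reduceCtorEq] at huv
  · exact huv ▸ rfl
  · refine .of_neighborSet_eq (hU.neighborSet_eq_of_forall_adj_iff hu hv fun w hw => ?_)
    simpa using Set.ext_iff.mp huv ⟨w, hw⟩

theorem exists_isVertexCover_card_eq_vertexCoverNumber [Fintype V] (G : SimpleGraph V) :
    ∃ U : Finset V, G.IsVertexCover U ∧ U.card = vertexCoverNumber G := by
  obtain ⟨U, hU, hcard⟩ := Nat.sInf_mem (s := {k | ∃ U : Finset V,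
      (∀ u v, G.Adj u v → u ∈ U ∨ v ∈ U) ∧ U.card = k})
    ⟨_, Finset.univ, fun u _ _ => .inl (Finset.mem_univ u), rfl⟩
  exact ⟨U, fun u v huv => hU u v huv, hcard⟩

end

theorem stmt_9 {V : Type*} [Fintype V] (G : SimpleGraph V) :
    nd G ≤ 2 ^ vertexCoverNumber G + vertexCoverNumber G := by
  obtain ⟨U, hU, hcard⟩ := exists_isVertexCover_card_eq_vertexCoverNumber G
  exact hcard ▸ nd_le_two_pow_card_add_card hU
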